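/- Let w be a palindrome over {a,b}. Then w is trapezoidal if and only if w is balanced. -/

import Mathlib

open List

/-- Words over the two-letter alphabet {a,b}, encoded as lists of booleans
(`false` = a, `true` = b). -/
abbrev Word := List Bool

/-- The set of factors of `w` of length `n`. -/
def factorSet (w : Word) (n : ℕ) : Set Word :=
  {u | u.length = n ∧ u <:+: w}

/-- `w` is trapezoidal if it has at most `n+1` distinct factors of length `n`, for all `n`. -/
def Trapezoidal (w : Word) : Prop :=
  ∀ n : ℕ, (factorSet w n).ncard ≤ n + 1

/-- `u` is a right special factor of `w`. -/
def RightSpecial (w u : Word) : Prop :=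
  (u ++ [false]) <:+: w ∧ (u ++ [true]) <:+: w

/-- `u` is a left special factor of `w`. -/
def LeftSpecial (w u : Word) : Prop :=
  (false :: u) <:+: w ∧ (true :: u) <:+: w

/-- The number of occurrences of `u` as a factor of `w` (counted by starting position). -/
noncomputable def occ (u w : Word) : ℕ :=
  {i : ℕ | i + u.length ≤ w.length ∧ (w.drop i).take u.length = u}.ncard

/-- `H_w`: the minimal length of a prefix of `w` occurring exactly once in `w`. -/
noncomputable def Hp (w : Word) : ℕ := sInf {n | n ≤ w.length ∧ occ (w.take n) w = 1}

/-- `K_w`: the minimal length of a suffix of `w` occurring exactly once in `w`. -/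
noncomputable def Kp (w : Word) : ℕ := sInf {n | n ≤ w.length ∧ occ (w.drop (w.length - n)) w = 1}

/-- `R_w`: the minimal `n` such that `w` has no right special factor of length `n`. -/
noncomputable def Rp (w : Word) : ℕ := sInf {n | ∀ u : Word, u.length = n → ¬ RightSpecial w u}

/-- `L_w`: the minimal `n` such that `w` has no left special factor of length `n`. -/
noncomputable def Lp (w : Word) : ℕ := sInf {n | ∀ u : Word, u.length = n → ¬ LeftSpecial w u}

/-- A word is closed if it is empty or has a factor, different from the word itself,
occurring exactly twice, as a prefix and as a suffix. -/
def ClosedWord (w : Word) : Prop :=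
  w = [] ∨ ∃ u : Word, u ≠ w ∧ u <+: w ∧ u <:+ w ∧ occ u w = 2

/-- A binary word is balanced if any two factors of the same length have the same number
of occurrences of each letter, up to one. -/
def BalancedWord (w : Word) : Prop :=
  ∀ u v : Word, u <:+: w → v <:+: w → u.length = v.length →
    ∀ c : Bool, ((u.count c : ℤ) - (v.count c : ℤ)).natAbs ≤ 1

/-- `(f,g)` is a pathological pair of `w`. -/
def PathPair (w f g : Word) : Prop :=
  f <:+: w ∧ g <:+: w ∧ f.length = g.length ∧
    2 ≤ ((f.count false : ℤ) - (g.count false : ℤ)).natAbs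

/-- `p` is a period of `u`: `1 ≤ p ≤ |u|` and `u_i = u_{i+p}` whenever both sides are defined. -/
def HasPeriod (u : Word) (p : ℕ) : Prop :=
  1 ≤ p ∧ p ≤ u.length ∧ ∀ i : ℕ, i + p < u.length → u[i]? = u[i + p]?

/-- A word is central if it is empty or has two coprime periods `p`, `q`
with length `p + q - 2`. -/
def Central (u : Word) : Prop :=
  u = [] ∨ ∃ p q : ℕ, Nat.Coprime p q ∧ _root_.HasPeriod u p ∧ _root_.HasPeriod u q ∧ u.length + 2 = p + q

/-!
A balanced word has at most one right special factor of each length, so its number of factors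
grows by at most one with the length.

Conversely, let `n` be the least length at which the palindrome `w` is unbalanced. Along `w`
the weight of the length-`n` window moves by at most one per step; a shortest stretch between
windows of weights `c - 1` and `c + 1` passes through consecutive rotations of a single window
`u` of weight `c`. By minimality of `n`, `u` is primitive, so these rotations are distinct: they
give `n` factors of weight `c` (if the stretch is one rotation short, a reversed rotation, a
factor since `w` is a palindrome, makes up for it), and with the two extreme windows `w` has
`n + 2` factors of length `n`.
-/

namespace List

variable {α : Type*} {l : List α}

theorem injOn_rotate (h : ∀ d, 0 < d → d < l.length → l.rotate d ≠ l) :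
    Set.InjOn l.rotate (Set.Iio l.length) := by
  have key : ∀ j₁ j₂, j₁ < j₂ → j₂ < l.length → l.rotate j₁ ≠ l.rotate j₂ := by
    intro j₁ j₂ hlt hj₂ heq
    refine h (j₂ - j₁) (by omega) (by omega) (rotate_eq_rotate (n := j₁).1 ?_)
    rw [rotate_rotate, Nat.sub_add_cancel hlt.le, heq]
  intro j₁ hj₁ j₂ hj₂ heq
  rcases lt_trichotomy j₁ j₂ with hlt | rfl | hlt
  · exact absurd heq (key _ _ hlt hj₂)
  · rfl
  · exact absurd heq.symm (key _ _ hlt hj₁)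

/-- If the reversal of every rotation `l.rotate j`, `j < |l| - 1`, were again among them, `l`'s
reversal would be one of them, and then so would be the reversal of the missing rotation
`l.rotate (|l| - 1)`, making it a palindrome. -/
theorem exists_reverse_rotate_notMem (hinj : Set.InjOn l.rotate (Set.Iio l.length))
    (hx : (l.rotate (l.length - 1)).reverse ≠ l.rotate (l.length - 1)) :
    ∃ j < l.length - 1, (l.rotate j).reverse ∉ l.rotate '' Set.Iio (l.length - 1) := by
  have hl : 2 ≤ l.length := by
    match l, hx with
    | [], hx | [_], hx => simp at hx
    | _ :: _ :: _, _ => simp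
  by_cases h0 : l.reverse ∈ l.rotate '' Set.Iio (l.length - 1)
  · obtain ⟨d, hd, hdl⟩ := h0
    have hrev : (l.rotate (d + 1)).reverse = l.rotate (l.length - 1) := by
      rw [← rotate_rotate, hdl, reverse_rotate, reverse_reverse, length_reverse,
        Nat.mod_eq_of_lt (by omega)]
    have hd' : d + 1 < l.length - 1 := by
      by_contra hge
      rw [show d + 1 = l.length - 1 by simp at hd; omega] at hrev
      exact hx hrev
    refine ⟨d + 1, hd', fun ⟨k, hk, hkl⟩ => ?_⟩
    have := hinj (Set.mem_Iio.2 (by simp at hk; omega)) (Set.mem_Iio.2 (by omega))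
      (hkl.trans hrev)
    simp at hk
    omega
  · exact ⟨0, by omega, by simpa using h0⟩

end List

namespace Word

def window (w : Word) (i n : ℕ) : Word := (w.drop i).take n

/-- Reads `false` past the end of `w`. -/
def letter (w : Word) (k : ℕ) : Bool := w.getD k false

variable {w : Word} {i j k m n p d : ℕ}

theorem length_window (h : i + n ≤ w.length) : (window w i n).length = n := by
  simp [window]
  omega

theorem window_infix (w : Word) (i n : ℕ) : window w i n <:+: w :=
  infix_iff_prefix_suffix.2 ⟨w.drop i, take_prefix _ _, drop_suffix _ _⟩

theorem exists_window_eq_of_infix {u : Word} (h : u <:+: w) :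
    ∃ i, i + u.length ≤ w.length ∧ window w i u.length = u := by
  obtain ⟨s, t, rfl⟩ := h
  exact ⟨s.length, by simp, by simp [window]⟩

theorem letter_window (hj : j < n) : letter (window w i n) j = letter w (i + j) := by
  simp [letter, window, hj]

theorem window_succ (h : i + n < w.length) :
    window w i (n + 1) = window w i n ++ [letter w (i + n)] := by
  simp [window, take_add_one, letter, getElem?_eq_getElem h]

theorem window_succ_eq_cons (h : i < w.length) :
    window w i (n + 1) = letter w i :: window w (i + 1) n := by
  rw [window, drop_eq_getElem_cons h, take_succ_cons, letter, getD_eq_getElem w false h, window]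

theorem window_add_two (h : i + m + 2 ≤ w.length) :
    window w i (m + 2) = letter w i :: (window w (i + 1) m ++ [letter w (i + m + 1)]) := by
  rw [window_succ_eq_cons (by omega), window_succ (by omega), add_right_comm]

theorem window_congr {a b : ℕ} (ha : a + m ≤ w.length) (hb : b + m ≤ w.length)
    (h : ∀ j < m, letter w (a + j) = letter w (b + j)) : window w a m = window w b m := by
  refine ext_getElem (by rw [length_window ha, length_window hb]) fun j hja hjb => ?_
  have hj : j < m := by rwa [length_window ha] at hja
  have := h j hj
  rwa [← letter_window (i := a) hj, ← letter_window (i := b) hj, letter, letter,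
    getD_eq_getElem _ _ hja, getD_eq_getElem _ _ hjb] at this

theorem count_window_add_letter (h : i + n < w.length) :
    (window w i n).count true + (letter w (i + n)).toNat =
      (letter w i).toNat + (window w (i + 1) n).count true := by
  have := congrArg (count true) ((window_succ h).symm.trans (window_succ_eq_cons (by omega)))
  simp only [count_append, count_cons, count_nil] at this
  generalize letter w i = a at this ⊢
  generalize letter w (i + n) = b at this ⊢
  cases a <;> cases b <;> simp at this ⊢ <;> omega

theorem window_succ_eq_rotate (h : i + n < w.length) (hl : letter w i = letter w (i + n)) :
    window w (i + 1) n = (window w i n).rotate 1 := by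
  cases n with
  | zero => simp [window]
  | succ n =>
    rw [window_succ_eq_cons (i := i) (n := n) (by omega), rotate_cons_succ, rotate_zero,
      window_succ (by omega), hl, show i + 1 + n = i + (n + 1) by omega]

theorem letter_rotate {u : Word} (hm : m < u.length) :
    letter (u.rotate d) m = letter u ((m + d) % u.length) := by
  simp [letter, getElem?_rotate hm]

theorem letter_eq_of_rotate_window (hp : p + n ≤ w.length)
    (hrot : (window w p n).rotate d = window w p n) (hk : p ≤ k) (hkd : k + d < p + n) :
    letter w k = letter w (k + d) := by
  have hlen := length_window hp
  have := letter_rotate (u := window w p n) (m := k - p) (d := d) (by omega)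
  rw [hrot, hlen, Nat.mod_eq_of_lt (by omega), letter_window (by omega),
    letter_window (by omega)] at this
  rwa [Nat.add_sub_cancel' hk, ← add_assoc, Nat.add_sub_cancel' hk] at this

end Word

open Word

section Factors

variable {w : Word} {i n : ℕ}

theorem window_mem_factorSet (h : i + n ≤ w.length) : window w i n ∈ factorSet w n :=
  ⟨length_window h, window_infix w i n⟩

theorem factorSet_finite (w : Word) (n : ℕ) : (factorSet w n).Finite := by
  refine ((Set.finite_Iic w.length).image fun i => window w i n).subset ?_
  rintro u ⟨rfl, hu⟩
  obtain ⟨i, hi, hiu⟩ := exists_window_eq_of_infix hu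
  exact ⟨i, Set.mem_Iic.2 (by omega), hiu⟩

theorem reverse_mem_factorSet (hpal : w.reverse = w) {u : Word} (hu : u ∈ factorSet w n) :
    u.reverse ∈ factorSet w n :=
  ⟨by rw [length_reverse, hu.1], hpal ▸ reverse_infix.2 hu.2⟩

end Factors

section Balanced

variable {w : Word} {n : ℕ}

theorem RightSpecial.of_cons {u : Word} {a : Bool} (h : RightSpecial w (a :: u)) :
    RightSpecial w u :=
  ⟨(suffix_cons a _).isInfix.trans h.1, (suffix_cons a _).isInfix.trans h.2⟩

/-- Two distinct right special factors of equal length end in a common suffix `t` preceded by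
different letters `a ≠ b`; then `a t a` and `b t b` are factors contradicting balance. -/
theorem BalancedWord.rightSpecial_unique (hw : BalancedWord w) {u v : Word}
    (hlen : u.length = v.length) (hu : RightSpecial w u) (hv : RightSpecial w v) : u = v := by
  induction u generalizing v with
  | nil => exact (length_eq_zero_iff.1 hlen.symm).symm
  | cons a u ih =>
    obtain _ | ⟨b, v⟩ := v
    · simp at hlen
    obtain rfl := ih (by simpa using hlen) hu.of_cons hv.of_cons
    have haua : (a :: u) ++ [a] <:+: w := by cases a; exacts [hu.1, hu.2]
    have hbub : (b :: u) ++ [b] <:+: w := by cases b; exacts [hv.1, hv.2]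
    have := hw _ _ haua hbub (by simp) true
    cases a <;> cases b <;> simp at this ⊢ <;> omega

theorem injOn_dropLast_factorSet {z : Word}
    (hz : ∀ u, u.length = n → RightSpecial w u → u = z) :
    Set.InjOn dropLast (factorSet w (n + 1) \ {z ++ [true]}) := by
  have hconcat : ∀ x ∈ factorSet w (n + 1), ∃ y c, x = y ++ [c] := fun x hx =>
    (eq_nil_or_concat x).resolve_left (by rintro rfl; simp [factorSet] at hx) |>.imp
      fun _ ⟨c, hc⟩ => ⟨c, by simpa using hc⟩
  rintro x ⟨hx, hxz⟩ y ⟨hy, hyz⟩ hxy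
  obtain ⟨x, a, rfl⟩ := hconcat _ hx
  obtain ⟨y, b, rfl⟩ := hconcat _ hy
  simp only [dropLast_concat] at hxy
  subst hxy
  by_contra hab
  have hs : RightSpecial w x := by
    cases a <;> cases b <;> simp at hab
    exacts [⟨hx.2, hy.2⟩, ⟨hy.2, hx.2⟩]
  obtain rfl := hz x (by simpa using hx.1) hs
  cases a <;> cases b <;> simp_all

theorem ncard_factorSet_succ_le {z : Word}
    (hz : ∀ u, u.length = n → RightSpecial w u → u = z) :
    (factorSet w (n + 1)).ncard ≤ (factorSet w n).ncard + 1 := by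
  have hmaps : ∀ x ∈ factorSet w (n + 1) \ {z ++ [true]}, x.dropLast ∈ factorSet w n :=
    fun x ⟨⟨hlen, hx⟩, _⟩ => ⟨by simp [hlen], (dropLast_prefix x).isInfix.trans hx⟩
  calc (factorSet w (n + 1)).ncard
      ≤ (factorSet w (n + 1) \ {z ++ [true]}).ncard + ({z ++ [true]} : Set Word).ncard :=
        Set.ncard_le_ncard_sdiff_add_ncard _ _
    _ ≤ (factorSet w n).ncard + 1 := by
        rw [Set.ncard_singleton]
        exact Nat.add_le_add_right (Set.ncard_le_ncard_of_injOn _ hmaps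
          (injOn_dropLast_factorSet hz) (factorSet_finite w n)) 1

theorem BalancedWord.trapezoidal (hw : BalancedWord w) : Trapezoidal w := by
  intro n
  induction n with
  | zero =>
    refine (Set.ncard_le_one (factorSet_finite w 0)).2 fun x hx y hy => ?_
    rw [length_eq_zero_iff.1 hx.1, length_eq_zero_iff.1 hy.1]
  | succ n ih =>
    by_cases h : ∃ z, z.length = n ∧ RightSpecial w z
    · obtain ⟨z, hz, hzs⟩ := h
      have := ncard_factorSet_succ_le fun u hu hus =>
        hw.rightSpecial_unique (hu.trans hz.symm) hus hzs
      omega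
    · push Not at h
      have := ncard_factorSet_succ_le (z := []) fun u hu hus => absurd hus (h u hu)
      omega

end Balanced

/-- Take `g` minimal among all pairs of positions `i`, `i + g` at which `f` differs by at least
two. -/
theorem exists_jump_two {f : ℕ → ℕ} {M p q : ℕ}
    (hstep : ∀ k < M, f k ≤ f (k + 1) + 1 ∧ f (k + 1) ≤ f k + 1)
    (hp : p ≤ M) (hq : q ≤ M) (hpq : f q + 2 ≤ f p) :
    ∃ i g, 2 ≤ g ∧ i + g ≤ M ∧ (f i + 2 = f (i + g) ∨ f (i + g) + 2 = f i) ∧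
      ∀ k, i < k → k < i + g → 2 * f k = f i + f (i + g) := by
  classical
  have hex : ∃ g i, i + g ≤ M ∧ (f i + 2 ≤ f (i + g) ∨ f (i + g) + 2 ≤ f i) := by
    rcases le_total p q with h | h
    · exact ⟨q - p, p, by omega, Or.inr (by rwa [Nat.add_sub_cancel' h])⟩
    · exact ⟨p - q, q, by omega, Or.inl (by rwa [Nat.add_sub_cancel' h])⟩
  obtain ⟨i, hiM, hi⟩ := Nat.find_spec hex
  set g := Nat.find hex
  have hclose : ∀ j < g, ∀ k, k + j ≤ M → f k ≤ f (k + j) + 1 ∧ f (k + j) ≤ f k + 1 :=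
    fun j hj k hk => by
      have := Nat.find_min hex hj
      push Not at this
      have := this k hk
      omega
  have hg : 2 ≤ g := by
    by_contra! hg
    interval_cases h : g
    · simp at hi
    · have := hstep i (by omega)
      omega
  have h1 := hclose (g - 1) (by omega) (i + 1) (by omega)
  have h2 := hstep i (by omega)
  rw [show i + 1 + (g - 1) = i + g by omega] at h1
  refine ⟨i, g, hg, hiM, by omega, fun k hk1 hk2 => ?_⟩
  have h3 := hclose (k - i) (by omega) i (by omega)
  have h4 := hclose (i + g - k) (by omega) k (by omega)
  rw [Nat.add_sub_cancel' hk1.le] at h3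
  rw [show k + (i + g - k) = i + g by omega] at h4
  omega

def HasImbalanceAt (w : Word) (n : ℕ) : Prop :=
  ∃ p q, p + n ≤ w.length ∧ q + n ≤ w.length ∧
    (window w q n).count true + 2 ≤ (window w p n).count true

section Imbalance

variable {w : Word} {n d : ℕ}

theorem exists_hasImbalanceAt (hw : ¬ BalancedWord w) : ∃ n, HasImbalanceAt w n := by
  simp only [BalancedWord, not_forall, not_le] at hw
  obtain ⟨u, v, hu, hv, hlen, c, hc⟩ := hw
  obtain ⟨p, hp, hpu⟩ := exists_window_eq_of_infix hu
  obtain ⟨q, hq, hqv⟩ := exists_window_eq_of_infix hv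
  rw [← hlen] at hq hqv
  have hu' := count_true_add_count_false u
  have hv' := count_true_add_count_false v
  have : u.count true + 2 ≤ v.count true ∨ v.count true + 2 ≤ u.count true := by
    cases c <;> omega
  rcases this with h | h
  · exact ⟨u.length, q, p, hq, hp, by rwa [hpu, hqv]⟩
  · exact ⟨u.length, p, q, hp, hq, by rwa [hpu, hqv]⟩

/-- All windows of length `d` inside a `d`-periodic stretch `(l, r)` have the same weight;
entering the stretch at `l` and leaving it at `r` both trade the letter `a = w[l]` for `!a`. -/
theorem hasImbalanceAt_of_period {l r : ℕ} (hlr : l + d < r) (hr : r < w.length)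
    (hper : ∀ k, l < k → k + d < r → letter w k = letter w (k + d))
    (hl : letter w (l + d) = !letter w l) (hrd : letter w (r - d) = letter w l)
    (hrr : letter w r = !letter w l) : HasImbalanceAt w d := by
  have hconst : ∀ k, l + 1 ≤ k → k + d ≤ r →
      (window w k d).count true = (window w (l + 1) d).count true := by
    intro k hk
    induction k, hk using Nat.le_induction with
    | base => exact fun _ => rfl
    | succ k hk ih =>
      intro hkr
      have := count_window_add_letter (w := w) (i := k) (n := d) (by omega)
      rw [← hper k (by omega) (by omega)] at this
      have := ih (by omega)
      omega
  have hleft := count_window_add_letter (w := w) (i := l) (n := d) (by omega)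
  have hright := count_window_add_letter (w := w) (i := r - d) (n := d) (by omega)
  rw [hl] at hleft
  rw [Nat.sub_add_cancel (by omega), hrr, hrd, hconst (r - d) (by omega) (by omega)] at hright
  generalize letter w l = a at hleft hright
  cases a <;> simp at hleft hright
  · exact ⟨r - d + 1, l, by omega, by omega, by omega⟩
  · exact ⟨l, r - d + 1, by omega, by omega, by omega⟩

/-- What `exists_jump_two` yields for the weights of the length-`n` windows, read off letter by
letter: the windows at `i` and `i + g` have weights `c ∓ 1` and all those strictly between have
weight `c`. -/
structure GapConfig (w : Word) (n i g : ℕ) : Prop where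
  two_le : 2 ≤ g
  add_le_length : i + g + n ≤ w.length
  letter_add : letter w (i + n) = !letter w i
  letter_end : letter w (i + g - 1) = letter w i
  letter_end_add : letter w (i + g - 1 + n) = !letter w i
  letter_periodic : ∀ k, i < k → k + 1 < i + g → letter w k = letter w (k + n)

theorem HasImbalanceAt.exists_gapConfig (h : HasImbalanceAt w n) :
    ∃ i g, GapConfig w n i g := by
  obtain ⟨p, q, hp, hq, hpq⟩ := h
  have hstep : ∀ k, k + n < w.length → (window w k n).count true + (letter w (k + n)).toNat =
      (letter w k).toNat + (window w (k + 1) n).count true := fun k hk =>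
    count_window_add_letter hk
  obtain ⟨i, g, hg, higM, hjump, hmid⟩ :=
    exists_jump_two (f := fun k => (window w k n).count true) (M := w.length - n) (fun k hk => by
      have := hstep k (by omega)
      have := Bool.toNat_le (letter w k)
      have := Bool.toNat_le (letter w (k + n))
      omega) (by omega) (by omega) hpq
  have hl := hstep i (by omega)
  have hr := hstep (i + g - 1) (by omega)
  have h1 := hmid (i + 1) (by omega) (by omega)
  have h2 := hmid (i + g - 1) (by omega) (by omega)
  rw [Nat.sub_add_cancel (by omega)] at hr
  have hper : ∀ k, i < k → k + 1 < i + g → letter w k = letter w (k + n) := by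
    intro k hk1 hk2
    have := hstep k (by omega)
    have := hmid k hk1 (by omega)
    have := hmid (k + 1) (by omega) (by omega)
    have h : (letter w k).toNat = (letter w (k + n)).toNat := by omega
    generalize letter w k = a at h ⊢
    generalize letter w (k + n) = b at h ⊢
    cases a <;> cases b <;> simp at h ⊢
  refine ⟨i, g, ⟨hg, by omega, ?_, ?_, ?_, hper⟩⟩
  all_goals
    generalize letter w i = a at hl hr ⊢
    generalize letter w (i + n) = b at hl hr ⊢
    generalize letter w (i + g - 1) = c at hl hr ⊢
    generalize letter w (i + g - 1 + n) = e at hl hr ⊢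
    cases a <;> cases b <;> cases c <;> cases e <;> simp at hl hr ⊢ <;> omega

end Imbalance

namespace GapConfig

variable {w : Word} {n i g d : ℕ}

/-- The windows of length `g` at `i` and `i + n` read `a s a` and `!a s !a`. -/
theorem hasImbalanceAt_gap (hc : GapConfig w n i g) : HasImbalanceAt w g := by
  obtain ⟨m, rfl⟩ : ∃ m, g = m + 2 := ⟨g - 2, by have := hc.two_le; omega⟩
  have hlen := hc.add_le_length
  have hmid : window w (i + n + 1) m = window w (i + 1) m :=
    window_congr (by omega) (by omega) fun j hj => by
      rw [hc.letter_periodic (i + 1 + j) (by omega) (by omega)]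
      congr 1
      omega
  have hl := window_add_two (w := w) (i := i) (m := m) (by omega)
  have hr := window_add_two (w := w) (i := i + n) (m := m) (by omega)
  rw [show i + m + 1 = i + (m + 2) - 1 by omega, hc.letter_end] at hl
  rw [show i + n + m + 1 = i + (m + 2) - 1 + n by omega, hc.letter_end_add, hc.letter_add,
    hmid] at hr
  generalize letter w i = a at hl hr
  cases a
  · exact ⟨i + n, i, by omega, by omega, by simp [hl, hr]⟩
  · exact ⟨i, i + n, by omega, by omega, by simp [hl, hr]⟩

theorem window_eq_rotate (hc : GapConfig w n i g) {j : ℕ} (hj : j + 2 ≤ g) :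
    window w (i + 1 + j) n = (window w (i + 1) n).rotate j := by
  induction j with
  | zero => simp
  | succ j ih =>
    have hlen := hc.add_le_length
    rw [← add_assoc, window_succ_eq_rotate (by omega)
      (hc.letter_periodic (i + 1 + j) (by omega) (by omega)), ih (by omega), rotate_rotate]

theorem count_window_left (hc : GapConfig w n i g) :
    (window w i n).count true + (!letter w i).toNat =
      (letter w i).toNat + (window w (i + 1) n).count true := by
  have hlen := hc.add_le_length
  have := count_window_add_letter (w := w) (i := i) (n := n) (by have := hc.two_le; omega)
  rwa [hc.letter_add] at this

theorem count_window_right (hc : GapConfig w n i g) :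
    (window w (i + 1) n).count true + (!letter w i).toNat =
      (letter w i).toNat + (window w (i + g) n).count true := by
  have hlen := hc.add_le_length
  have hg := hc.two_le
  have := count_window_add_letter (w := w) (i := i + g - 1) (n := n) (by omega)
  rwa [hc.letter_end, hc.letter_end_add, Nat.sub_add_cancel (by omega),
    show i + g - 1 = i + 1 + (g - 2) by omega, hc.window_eq_rotate (by omega),
    (rotate_perm _ _).count_eq] at this

/-- A proper rotation period `d` of the window at `i + 1` is shared by all the windows up to
`i + g - 1`, which makes `w` `d`-periodic strictly between `i` and `i + g - 1 + n`. -/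
theorem hasImbalanceAt_of_rotate_eq_self (hc : GapConfig w n i g) (hd : 0 < d) (hdn : d < n)
    (hrot : (window w (i + 1) n).rotate d = window w (i + 1) n) : HasImbalanceAt w d := by
  have hlen := hc.add_le_length
  have hg := hc.two_le
  set u := window w (i + 1) n
  have hu : u.length = n := length_window (by omega)
  have hrot' : u.rotate (n - d) = u := by
    conv_lhs => rw [← hrot]
    rw [rotate_rotate, Nat.add_sub_cancel' hdn.le, ← hu, rotate_length]
  have hper : ∀ e, u.rotate e = u → ∀ p k, i < p → p + 1 ≤ i + g → p ≤ k → k + e < p + n →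
      letter w k = letter w (k + e) := by
    intro e he p k hp hpg hpk hke
    obtain ⟨j, rfl⟩ : ∃ j, p = i + 1 + j := ⟨p - (i + 1), by omega⟩
    refine letter_eq_of_rotate_window (by omega) ?_ hpk hke
    rw [hc.window_eq_rotate (by omega), rotate_rotate, add_comm j e, ← rotate_rotate, he]
  refine hasImbalanceAt_of_period (l := i) (r := i + g - 1 + n) (by omega) (by omega)
    (fun k hk1 hk2 => ?_) ?_ ?_ hc.letter_end_add
  · rcases le_or_gt k (i + g - 1) with hk | hk
    · exact hper d hrot k k hk1 (by omega) le_rfl (by omega)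
    · exact hper d hrot (i + g - 1) k (by omega) (by omega) hk.le (by omega)
  · have := hper (n - d) hrot' (i + 1) (i + d) (by omega) (by omega) (by omega) (by omega)
    rwa [show i + d + (n - d) = i + n by omega, hc.letter_add] at this
  · have := hper (n - d) hrot' (i + g - 1) (i + g - 1) (by omega) (by omega) le_rfl (by omega)
    rwa [show i + g - 1 + (n - d) = i + g - 1 + n - d by omega, hc.letter_end, eq_comm] at this

theorem le_ncard_sameWeight (hc : GapConfig w n i g) (hpal : w.reverse = w) (hng : n ≤ g)
    (hinj : Set.InjOn (window w (i + 1) n).rotate (Set.Iio n)) :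
    n ≤ {x ∈ factorSet w n | x.count true = (window w (i + 1) n).count true}.ncard := by
  have hlen := hc.add_le_length
  have hg := hc.two_le
  set u := window w (i + 1) n
  set S := {x ∈ factorSet w n | x.count true = u.count true}
  have hu : u.length = n := length_window (by omega)
  have hS : S.Finite := (factorSet_finite w n).subset (Set.sep_subset _ _)
  have hmem : ∀ j, j + 2 ≤ g → u.rotate j ∈ S := fun j hj => by
    rw [← hc.window_eq_rotate hj]
    refine ⟨window_mem_factorSet (by omega), ?_⟩
    rw [hc.window_eq_rotate hj, (rotate_perm _ _).count_eq]
  have hIio : ∀ m, (Set.Iio m).ncard = m := fun m => by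
    rw [← Finset.coe_Iio, Set.ncard_coe_finset, Nat.card_Iio]
  rcases hng.lt_or_eq with hlt | rfl
  · calc n = (u.rotate '' Set.Iio n).ncard := by rw [hinj.ncard_image, hIio]
      _ ≤ S.ncard := Set.ncard_le_ncard
          (Set.image_subset_iff.2 fun j hj => hmem j (by simp at hj; omega)) hS
  -- for `g = n` one rotation of `u` is missing, and a reversed one (a factor since `w` is a
  -- palindrome) takes its place
  have hlast :
      u.rotate (n - 1) = (!letter w i) :: (window w (i + 1) (n - 2) ++ [letter w i]) := by
    have h1 := window_succ (w := w) (i := i + 1) (n := n - 1) (by omega)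
    have h2 := window_succ (w := w) (i := i + 1) (n := n - 2) (by omega)
    rw [Nat.sub_add_cancel (by omega), show i + 1 + (n - 1) = i + n by omega] at h1
    rw [show n - 2 + 1 = n - 1 by omega, show i + 1 + (n - 2) = i + n - 1 by omega,
      hc.letter_end] at h2
    have hlen' : (window w (i + 1) (n - 2) ++ [letter w i]).length = n - 1 := by
      rw [length_append, length_window (by omega), length_singleton]
      omega
    change (window w (i + 1) n).rotate (n - 1) = _
    rw [h1, hc.letter_add, h2, ← hlen', rotate_append_length_eq, singleton_append]
  have hnotpal : (u.rotate (u.length - 1)).reverse ≠ u.rotate (u.length - 1) := by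
    rw [hu, hlast]
    simp
  obtain ⟨j, hj, hjS⟩ := exists_reverse_rotate_notMem (hu ▸ hinj) hnotpal
  rw [hu] at hj hjS
  calc n = (insert (u.rotate j).reverse (u.rotate '' Set.Iio (n - 1))).ncard := by
        rw [Set.ncard_insert_of_notMem hjS (Set.toFinite _),
          (hinj.mono (Set.Iio_subset_Iio (by omega))).ncard_image, hIio]
        omega
    _ ≤ S.ncard := by
        refine Set.ncard_le_ncard (Set.insert_subset ?_ ?_) hS
        · exact ⟨reverse_mem_factorSet hpal (hmem j (by omega)).1,
            by rw [count_reverse]; exact (hmem j (by omega)).2⟩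
        · exact Set.image_subset_iff.2 fun k hk => hmem k (by simp at hk; omega)

theorem add_two_le_ncard_factorSet (hc : GapConfig w n i g) (hpal : w.reverse = w)
    (hng : n ≤ g) (hinj : Set.InjOn (window w (i + 1) n).rotate (Set.Iio n)) :
    n + 2 ≤ (factorSet w n).ncard := by
  have hlen := hc.add_le_length
  set S := {x ∈ factorSet w n | x.count true = (window w (i + 1) n).count true}
  have hl := hc.count_window_left
  have hr := hc.count_window_right
  generalize letter w i = a at hl hr
  have hiS : window w i n ∉ S := fun h => by cases a <;> simp [h.2] at hl
  have hgS : window w (i + g) n ∉ insert (window w i n) S := by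
    rintro (h | h)
    · cases a <;> simp [h] at hl hr <;> omega
    · cases a <;> simp [h.2] at hr
  have hS : S.Finite := (factorSet_finite w n).subset (Set.sep_subset _ _)
  calc n + 2 ≤ (insert (window w (i + g) n) (insert (window w i n) S)).ncard := by
        rw [Set.ncard_insert_of_notMem hgS (hS.insert _), Set.ncard_insert_of_notMem hiS hS]
        have : n ≤ S.ncard := hc.le_ncard_sameWeight hpal hng hinj
        omega
    _ ≤ (factorSet w n).ncard :=
        Set.ncard_le_ncard (Set.insert_subset (window_mem_factorSet (by omega))
          (Set.insert_subset (window_mem_factorSet (by omega)) (Set.sep_subset _ _)))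
          (factorSet_finite w n)

end GapConfig

/-- For the least `n` at which `w` is unbalanced, the rotations of the middle window are
pairwise distinct: a proper rotation period would yield an imbalance at a smaller length. -/
theorem exists_add_two_le_ncard_factorSet {w : Word} (hpal : w.reverse = w)
    (hw : ¬ BalancedWord w) : ∃ n, n + 2 ≤ (factorSet w n).ncard := by
  classical
  have hex := exists_hasImbalanceAt hw
  set n := Nat.find hex
  obtain ⟨i, g, hc⟩ := (Nat.find_spec hex).exists_gapConfig
  have hng : n ≤ g := not_lt.1 fun h => Nat.find_min hex h hc.hasImbalanceAt_gap
  have hlen : (window w (i + 1) n).length = n :=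
    length_window (by have := hc.add_le_length; have := hc.two_le; omega)
  have hinj := injOn_rotate (l := window w (i + 1) n) fun d hd hdn hrot => by
    rw [hlen] at hdn
    exact Nat.find_min hex hdn (hc.hasImbalanceAt_of_rotate_eq_self hd hdn hrot)
  rw [hlen] at hinj
  exact ⟨n, hc.add_two_le_ncard_factorSet hpal hng hinj⟩

/-- A palindrome is trapezoidal if and only if it is balanced (Sturmian). -/
theorem palindrome_trapezoidal_iff_balanced (w : Word) (hpal : w.reverse = w) :
    Trapezoidal w ↔ BalancedWord w := by
  refine ⟨fun htrap => ?_, BalancedWord.trapezoidal⟩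
  by_contra hw
  obtain ⟨n, hn⟩ := exists_add_two_le_ncard_factorSet hpal hw
  have := htrap n
  omega
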